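/- The lookahead marginals satisfy the recursion γ_t^look(x_{1:t}) = γ_{t-1}^look(x_{1:t-1}) · m_t(x_t | x_{<t}) · ψ_t(x_{1:t}) · L_t(x_{1:t}) / L_{t-1}(x_{1:t-1}), whenever L_{t-1}(x_{1:t-1}) ≠ 0. -/
import Mathlib


open Finset

/-- Extend a finite sequence `z : Fin T → V` to `ℕ → V`, using the ambient
sequence `x` beyond position `T`. -/
def extSeq {V : Type*} (T : ℕ) (x : ℕ → V) (z : Fin T → V) : ℕ → V :=
  fun i => if h : i < T then z ⟨i, h⟩ else x i

/-- The unnormalized lookahead marginal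
`γ_t^look(x_{1:t}) = Σ_{x_{t+1:T}} ∏_{s=1}^T m_s(x_{1:s}) ∏_{s=1}^T ψ_s(x_{1:s})`,
encoded as a sum over all full sequences `z : Fin T → V` agreeing with the
prefix `x` on the first `t` coordinates. -/
noncomputable def glook {V : Type*} [Fintype V] [DecidableEq V] (T : ℕ)
    (m ψ : ℕ → (ℕ → V) → ℝ) (x : ℕ → V) (t : ℕ) : ℝ :=
  ∑ z ∈ univ.filter fun z : Fin T → V => ∀ i : Fin T, (i : ℕ) < t → z i = x (i : ℕ),
    (∏ s ∈ range T, m (s + 1) (extSeq T x z)) *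
      ∏ s ∈ range T, ψ (s + 1) (extSeq T x z)

/-- The lookahead term
`L_t(x_{1:t}) = Σ_{x_{t+1:T}} ∏_{s=t+1}^T m_s(x_{1:s}) ∏_{s=t+1}^T ψ_s(x_{1:s})`,
with the convention `L_T = 1` (empty products, single summand). -/
noncomputable def lkTerm {V : Type*} [Fintype V] [DecidableEq V] (T : ℕ)
    (m ψ : ℕ → (ℕ → V) → ℝ) (x : ℕ → V) (t : ℕ) : ℝ :=
  ∑ z ∈ univ.filter fun z : Fin T → V => ∀ i : Fin T, (i : ℕ) < t → z i = x (i : ℕ),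
    (∏ s ∈ Ico t T, m (s + 1) (extSeq T x z)) *
      ∏ s ∈ Ico t T, ψ (s + 1) (extSeq T x z)


theorem glook_eq_aux {V : Type*} [Fintype V] [DecidableEq V]
    (T : ℕ) (m ψ : ℕ → (ℕ → V) → ℝ)
    (hmloc : ∀ s (x y : ℕ → V), (∀ i < s, x i = y i) → m s x = m s y)
    (hψloc : ∀ s (x y : ℕ → V), (∀ i < s, x i = y i) → ψ s x = ψ s y)
    (x : ℕ → V) (t : ℕ) (htT : t ≤ T) :
    glook T m ψ x t =
      ((∏ s ∈ range t, m (s + 1) x) * ∏ s ∈ range t, ψ (s + 1) x) *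
        lkTerm T m ψ x t := by
  unfold glook lkTerm
  rw [Finset.mul_sum]
  refine Finset.sum_congr rfl fun z hz => ?_
  simp only [Finset.mem_filter, Finset.mem_univ, true_and] at hz
  have hext : ∀ i : ℕ, i < t → extSeq T x z i = x i := by
    intro i hi
    have hiT : i < T := lt_of_lt_of_le hi htT
    simp only [extSeq, dif_pos hiT]
    exact hz ⟨i, hiT⟩ hi
  have hm : ∀ s ∈ range t, m (s + 1) (extSeq T x z) = m (s + 1) x := by
    intro s hs
    refine hmloc _ _ _ fun i hi => ?_
    exact hext i (lt_of_lt_of_le hi (Finset.mem_range.mp hs))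
  have hψ : ∀ s ∈ range t, ψ (s + 1) (extSeq T x z) = ψ (s + 1) x := by
    intro s hs
    refine hψloc _ _ _ fun i hi => ?_
    exact hext i (lt_of_lt_of_le hi (Finset.mem_range.mp hs))
  rw [← Finset.prod_range_mul_prod_Ico (fun s => m (s + 1) (extSeq T x z)) htT,
      ← Finset.prod_range_mul_prod_Ico (fun s => ψ (s + 1) (extSeq T x z)) htT,
      Finset.prod_congr rfl hm, Finset.prod_congr rfl hψ]
  ring

/-- the lookahead marginals satisfy the recursion
`γ_t^look(x_{1:t}) = γ_{t-1}^look(x_{1:t-1}) · m_t(x_{1:t}) · ψ_t(x_{1:t}) ·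
L_t(x_{1:t}) / L_{t-1}(x_{1:t-1})` whenever `L_{t-1}(x_{1:t-1}) ≠ 0`.
Here the paper's step `t` (1-indexed) is `t + 1` with `t` 0-indexed. -/
theorem lookahead_recursion {V : Type*} [Fintype V] [DecidableEq V]
    (T : ℕ) (hT : 0 < T)
    (m ψ : ℕ → (ℕ → V) → ℝ)
    (hm0 : ∀ s x, 0 ≤ m s x) (hψ0 : ∀ s x, 0 ≤ ψ s x)
    (hmloc : ∀ s (x y : ℕ → V), (∀ i < s, x i = y i) → m s x = m s y)
    (hψloc : ∀ s (x y : ℕ → V), (∀ i < s, x i = y i) → ψ s x = ψ s y)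
    (x : ℕ → V) (t : ℕ) (ht : t < T)
    (hL : lkTerm T m ψ x t ≠ 0) :
    glook T m ψ x (t + 1) =
      glook T m ψ x t * m (t + 1) x * ψ (t + 1) x *
        lkTerm T m ψ x (t + 1) / lkTerm T m ψ x t := by
  have h1 := glook_eq_aux T m ψ hmloc hψloc x t ht.le
  have h2 := glook_eq_aux T m ψ hmloc hψloc x (t + 1) ht
  rw [h1, h2, Finset.prod_range_succ, Finset.prod_range_succ]
  field_simp
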